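/- arXiv:2603.06175 — 2 statements merged into one kernel-verified Lean document; each statement's English description precedes it below -/
import Mathlib

section
/- Generalized Fubini theorem for integrable functions: Let f : X×Y → ℝ be R_★-integrable, where R_★ is the extension of the product measure P×Q to 𝔄★𝔅 = σ((𝔄⊗𝔅) ∪ M*). Then f is nearly separately integrable (f(·,y) is P-integrable for Q-a.e. y and f(x,·) is Q-integrable for P-a.e. x) and ∫_{X×Y} f dR_★ = ∫_Y (∫_X f(x,y) dP(x)) dQ(y) = ∫_X (∫_Y f(x,y) dQ(y)) dP(x). -/
open MeasureTheory Set
open scoped symmDiff ENNReal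

/-- The σ-ideal `M*` of nil sets. -/
def nilStar {X Y : Type*} [MeasurableSpace X] [MeasurableSpace Y]
    (P : Measure X) (Q : Measure Y) : Set (Set (X × Y)) :=
  {E | (∃ N : Set X, MeasurableSet N ∧ P N = 0 ∧ ∀ x ∉ N, Q {y | (x, y) ∈ E} = 0) ∧
       (∃ M : Set Y, MeasurableSet M ∧ Q M = 0 ∧ ∀ y ∉ M, P {x | (x, y) ∈ E} = 0)}

/-- The σ-algebra `𝔄★𝔅 = σ((𝔄⊗𝔅) ∪ M*)`. -/
def bigStarSigma {X Y : Type*} [MeasurableSpace X] [MeasurableSpace Y]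
    (P : Measure X) (Q : Measure Y) : MeasurableSpace (X × Y) :=
  MeasurableSpace.generateFrom ({E | MeasurableSet E} ∪ nilStar P Q)

/-!
Every `𝔄★𝔅`-measurable set differs from an `𝔄⊗𝔅`-measurable set by a nil set, and every
`R★`-null set is nil, because a measurable `P×Q`-null set is nil by Tonelli. Reading `f` off its
rational sublevel sets, it agrees `R★`-a.e. with an `𝔄⊗𝔅`-measurable `g`. The classical Fubini
theorem applies to `g`, and since `{f ≠ g}` is nil, almost every section of `f` agrees almost
everywhere with the corresponding section of `g`.
-/

open Filter

theorem MeasureTheory.ae_iff_exists_measurableSet_null {α : Type*} [MeasurableSpace α]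
    {μ : Measure α} {p : α → Prop} :
    (∀ᵐ x ∂μ, p x) ↔ ∃ N, MeasurableSet N ∧ μ N = 0 ∧ ∀ x ∉ N, p x := by
  rw [ae_iff, ← exists_measurable_superset_iff_measure_eq_zero]
  refine exists_congr fun N => ?_
  have : {x | ¬p x} ⊆ N ↔ ∀ x ∉ N, p x := forall_congr' fun x => not_imp_comm
  rw [this]
  tauto

theorem MeasureTheory.AEStronglyMeasurable.of_forall_exists_ae_eq {α : Type*}
    {m m₀ : MeasurableSpace α} {μ : Measure[m₀] α}
    (h : ∀ s, MeasurableSet[m₀] s → ∃ t, MeasurableSet[m] t ∧ s =ᵐ[μ] t) {f : α → ℝ}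
    (hf : AEStronglyMeasurable[m₀] f μ) : AEStronglyMeasurable[m] f μ := by
  classical
  obtain ⟨f', hf', hff'⟩ := hf
  choose t ht hft using fun q : ℚ =>
    h (f' ⁻¹' Iio (q : ℝ)) (hf'.measurable measurableSet_Iio)
  have hgood : ∀ᵐ x ∂μ, ∀ q : ℚ, f' x < q ↔ x ∈ t q :=
    ae_all_iff.2 fun q => (hft q).mono fun x hx => Iff.of_eq hx
  -- Off a null set, `f' x` is the infimum of the rationals `q` with `x ∈ t q`.
  set g : α → EReal := fun x => ⨅ q : ℚ, if x ∈ t q then ((q : ℝ) : EReal) else ⊤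
  have hg : Measurable[m] g :=
    .iInf fun q => Measurable.ite (ht q) measurable_const measurable_const
  refine ⟨fun x => (g x).toReal, hg.ereal_toReal.stronglyMeasurable, hff'.trans ?_⟩
  filter_upwards [hgood] with x hx
  suffices g x = f' x by simp [this]
  refine le_antisymm (le_of_forall_gt fun c hc => ?_) (le_iInf fun q => ?_)
  · obtain ⟨q, hxq, hqc⟩ := EReal.lt_iff_exists_rat_btwn.1 hc
    exact (iInf_le _ q).trans_lt (by simpa [(hx q).1 (mod_cast hxq)] using hqc)
  · split_ifs with hq
    · exact_mod_cast ((hx q).2 hq).le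
    · exact le_top

section NilSets

variable {X Y : Type*} [MeasurableSpace X] [MeasurableSpace Y] {P : Measure X} {Q : Measure Y}

theorem mem_nilStar_iff {E : Set (X × Y)} :
    E ∈ nilStar P Q ↔
      (∀ᵐ x ∂P, ∀ᵐ y ∂Q, (x, y) ∉ E) ∧ ∀ᵐ y ∂Q, ∀ᵐ x ∂P, (x, y) ∉ E := by
  rw [ae_iff_exists_measurableSet_null, ae_iff_exists_measurableSet_null]
  simp only [ae_iff, not_not]
  rfl

theorem empty_mem_nilStar : ∅ ∈ nilStar P Q :=
  mem_nilStar_iff.2 (by simp)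

theorem nilStar_mono {E F : Set (X × Y)} (hEF : E ⊆ F) (hF : F ∈ nilStar P Q) :
    E ∈ nilStar P Q := by
  rw [mem_nilStar_iff] at hF ⊢
  exact ⟨hF.1.mono fun _ h => h.mono fun _ hy hE => hy (hEF hE),
    hF.2.mono fun _ h => h.mono fun _ hx hE => hx (hEF hE)⟩

theorem iUnion_mem_nilStar {ι : Sort*} [Countable ι] {E : ι → Set (X × Y)}
    (h : ∀ i, E i ∈ nilStar P Q) : ⋃ i, E i ∈ nilStar P Q := by
  simp only [mem_nilStar_iff, mem_iUnion, not_exists] at h ⊢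
  simp only [ae_all_iff]
  exact ⟨fun i => (h i).1, fun i => (h i).2⟩

theorem union_mem_nilStar {E F : Set (X × Y)} (hE : E ∈ nilStar P Q) (hF : F ∈ nilStar P Q) :
    E ∪ F ∈ nilStar P Q := by
  rw [union_eq_iUnion]
  exact iUnion_mem_nilStar (Bool.forall_bool.2 ⟨hF, hE⟩)

theorem mem_nilStar_of_prod_null [SFinite P] [SFinite Q] {E : Set (X × Y)}
    (hE : P.prod Q E = 0) : E ∈ nilStar P Q := by
  rw [measure_eq_zero_iff_ae_notMem] at hE
  exact mem_nilStar_iff.2 ⟨Measure.ae_ae_of_ae_prod hE,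
    Measure.ae_ae_of_ae_prod (Measure.measurePreserving_swap.quasiMeasurePreserving.ae hE)⟩

theorem exists_measurableSet_symmDiff_mem_nilStar {s : Set (X × Y)}
    (hs : MeasurableSet[bigStarSigma P Q] s) :
    ∃ t, MeasurableSet t ∧ s ∆ t ∈ nilStar P Q := by
  induction s, hs using MeasurableSpace.generateFrom_induction with
  | hC s hs _ =>
    rcases hs with hs | hs
    · exact ⟨s, hs, by simpa using empty_mem_nilStar⟩
    · exact ⟨∅, .empty, by rwa [← bot_eq_empty, symmDiff_bot]⟩
  | empty => exact ⟨∅, .empty, by simpa using empty_mem_nilStar⟩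
  | compl s _ ih =>
    obtain ⟨t, ht, hst⟩ := ih
    exact ⟨tᶜ, ht.compl, by rwa [compl_symmDiff_compl]⟩
  | iUnion s _ ih =>
    choose t ht hst using ih
    exact ⟨⋃ n, t n, .iUnion ht,
      nilStar_mono iUnion_symmDiff_iUnion_subset (iUnion_mem_nilStar hst)⟩

theorem prod_le_bigStarSigma : (inferInstance : MeasurableSpace (X × Y)) ≤ bigStarSigma P Q :=
  fun _ hs => MeasurableSpace.measurableSet_generateFrom (Or.inl hs)

variable {ρ : Measure[bigStarSigma P Q] (X × Y)}

theorem trim_bigStarSigma_eq_prod (hρ : ∀ E, MeasurableSet E → ρ E = P.prod Q E) :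
    ρ.trim prod_le_bigStarSigma = P.prod Q :=
  Measure.ext fun s hs => by rw [trim_measurableSet_eq _ hs, hρ s hs]

theorem exists_measurableSet_ae_eq (hρnull : ∀ M ∈ nilStar P Q, ρ M = 0) {s : Set (X × Y)}
    (hs : MeasurableSet[bigStarSigma P Q] s) : ∃ t, MeasurableSet t ∧ s =ᵐ[ρ] t :=
  let ⟨t, ht, hst⟩ := exists_measurableSet_symmDiff_mem_nilStar hs
  ⟨t, ht, measure_symmDiff_eq_zero_iff.1 (hρnull _ hst)⟩

theorem mem_nilStar_of_measure_eq_zero [SFinite P] [SFinite Q]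
    (hρ : ∀ E, MeasurableSet E → ρ E = P.prod Q E) (hρnull : ∀ M ∈ nilStar P Q, ρ M = 0)
    {s : Set (X × Y)} (hs : ρ s = 0) : s ∈ nilStar P Q := by
  obtain ⟨s', hss', hs', hs'0⟩ := @exists_measurable_superset_of_null _ (bigStarSigma P Q) _ _ hs
  obtain ⟨t, ht, hs't⟩ := exists_measurableSet_symmDiff_mem_nilStar hs'
  have ht0 : P.prod Q t = 0 := by
    rw [← hρ t ht, ← measure_congr (measure_symmDiff_eq_zero_iff.1 (hρnull _ hs't)), hs'0]
  refine nilStar_mono (hss'.trans fun z hz => ?_)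
    (union_mem_nilStar (mem_nilStar_of_prod_null ht0) hs't)
  by_cases hzt : z ∈ t
  · exact Or.inl hzt
  · exact Or.inr (Or.inl ⟨hz, hzt⟩)

theorem ae_ae_of_ae_bigStar [SFinite P] [SFinite Q]
    (hρ : ∀ E, MeasurableSet E → ρ E = P.prod Q E) (hρnull : ∀ M ∈ nilStar P Q, ρ M = 0)
    {p : X × Y → Prop} (h : ∀ᵐ z ∂ρ, p z) :
    (∀ᵐ x ∂P, ∀ᵐ y ∂Q, p (x, y)) ∧ ∀ᵐ y ∂Q, ∀ᵐ x ∂P, p (x, y) := by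
  simpa using mem_nilStar_iff.1 (mem_nilStar_of_measure_eq_zero hρ hρnull (ae_iff.1 h))

end NilSets

theorem generalized_fubini_integral_general {X Y : Type*} [MeasurableSpace X] [MeasurableSpace Y]
    (P : Measure X) (Q : Measure Y) [IsProbabilityMeasure P] [IsProbabilityMeasure Q]
    (Rstar : @Measure (X × Y) (bigStarSigma P Q))
    (hRstar : ∀ E : Set (X × Y), MeasurableSet E → Rstar E = (P.prod Q) E)
    (hRnull : ∀ M ∈ nilStar P Q, Rstar M = 0)
    (f : X × Y → ℝ) (hf : Integrable f Rstar) :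
    (∀ᵐ y ∂Q, Integrable (fun x => f (x, y)) P) ∧
    (∀ᵐ x ∂P, Integrable (fun y => f (x, y)) Q) ∧
    (∫ p, f p ∂ Rstar) = ∫ y, ∫ x, f (x, y) ∂P ∂Q ∧
    (∫ p, f p ∂ Rstar) = ∫ x, ∫ y, f (x, y) ∂Q ∂P := by
  obtain ⟨g, hg, hfg⟩ : AEStronglyMeasurable f Rstar :=
    hf.1.of_forall_exists_ae_eq fun _ => exists_measurableSet_ae_eq hRnull
  have htrim := trim_bigStarSigma_eq_prod hRstar
  have hg_int : Integrable g (P.prod Q) := htrim ▸ (hf.congr hfg).trim prod_le_bigStarSigma hg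
  have hf_eq : ∫ p, f p ∂ Rstar = ∫ p, g p ∂P.prod Q := by
    rw [integral_congr_ae hfg, integral_trim prod_le_bigStarSigma hg, htrim]
  obtain ⟨hx, hy⟩ := ae_ae_of_ae_bigStar hRstar hRnull hfg
  refine ⟨?_, ?_, ?_, ?_⟩
  · filter_upwards [hg_int.prod_left_ae, hy] with y hgy hfgy
    exact hgy.congr (EventuallyEq.symm hfgy)
  · filter_upwards [hg_int.prod_right_ae, hx] with x hgx hfgx
    exact hgx.congr (EventuallyEq.symm hfgx)
  · rw [hf_eq, integral_prod_symm g hg_int]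
    refine integral_congr_ae ?_
    filter_upwards [hy] with y hfgy using (integral_congr_ae hfgy).symm
  · rw [hf_eq, integral_prod g hg_int]
    refine integral_congr_ae ?_
    filter_upwards [hx] with x hfgx using (integral_congr_ae hfgx).symm

/-- generalized Fubini theorem for integrable functions:
if `f : X×Y → ℝ` is `R_★`-integrable, then `f` is nearly separately integrable and
`∫ f dR_★ = ∫_Y ∫_X f dP dQ = ∫_X ∫_Y f dQ dP`. -/
theorem generalized_fubini_integral {X Y : Type*} [MeasurableSpace X] [MeasurableSpace Y]
    (P : Measure X) (Q : Measure Y) [IsProbabilityMeasure P] [IsProbabilityMeasure Q]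
    (hP : P.IsComplete) (hQ : Q.IsComplete)
    (Rstar : @Measure (X × Y) (bigStarSigma P Q))
    (hRstar : ∀ E : Set (X × Y), MeasurableSet E → Rstar E = (P.prod Q) E)
    (hRnull : ∀ M ∈ nilStar P Q, Rstar M = 0)
    (f : X × Y → ℝ) (hf : Integrable f Rstar) :
    (∀ᵐ y ∂Q, Integrable (fun x => f (x, y)) P) ∧
    (∀ᵐ x ∂P, Integrable (fun y => f (x, y)) Q) ∧
    (∫ p, f p ∂ Rstar) = ∫ y, ∫ x, f (x, y) ∂P ∂Q ∧
    (∫ p, f p ∂ Rstar) = ∫ x, ∫ y, f (x, y) ∂Q ∂P :=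
  generalized_fubini_integral_general P Q Rstar hRstar hRnull f hf
end

section
/- In the direct product case (P_y = P for all y), a function f : X×Y → ℝ whose Y-sections f(·,y) are all P̂-measurable has a version g that is measurable with respect to the completion 𝔄⊗̂𝔅 of the product σ-algebra and satisfies P̂({x : f(x,y) ≠ g(x,y)}) = 0 for every y ∈ Y, if and only if f is measurable with respect to 𝔄⋇𝔅 = {W △ N : W ∈ 𝔄⊗𝔅, N ∈ M}, where M = {E : P̂(E^y) = 0 for Q-a.e. y}. -/
/-! Both sides say that `f` is measurable modulo the σ-ideal `leftNil`. Indeed `𝔄⋇𝔅` is exactly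
the σ-algebra of sets that agree with an `𝔄⊗𝔅`-set off a set of `leftNil`, and by Fubini every
`(P×Q)`-null set lies in `leftNil`. Conversely, a real function that is measurable modulo a
σ-ideal agrees off the ideal with a measurable function, assembled from measurable replacements of
its rational superlevel sets; redefining that function as `f` over the `Q`-null set of bad sections
yields the version. -/

open MeasureTheory Set
open scoped symmDiff ENNReal

/-- The σ-ideal `M` of left nil sets (here for the constant family `P_y = P`):
`E ∈ M` iff `E^y` is `P̂`-null for `Q`-a.e. `y`. -/
def leftNil {X Y : Type*} {mX : MeasurableSpace X} [MeasurableSpace Y]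
    (Py : Y → @Measure X mX) (Q : Measure Y) : Set (Set (X × Y)) :=
  {E | ∃ N : Set Y, MeasurableSet N ∧ Q N = 0 ∧ ∀ y ∉ N, Py y {x | (x, y) ∈ E} = 0}

/-- The σ-algebra `𝔄⋇𝔅`. -/
def starSigma {X Y : Type*} {mX : MeasurableSpace X} [MeasurableSpace Y]
    (Py : Y → @Measure X mX) (Q : Measure Y) : MeasurableSpace (X × Y) :=
  MeasurableSpace.generateFrom
    {V | ∃ W N : Set (X × Y), MeasurableSet W ∧ N ∈ leftNil Py Q ∧ V = W ∆ N}

open Filter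

theorem EReal.iSup_rat_ite_lt (a : EReal) :
    (⨆ q : ℚ, if ((q : ℝ) : EReal) < a then ((q : ℝ) : EReal) else ⊥) = a := by
  refine le_antisymm (iSup_le fun q => ?_) (le_of_forall_lt fun c hc => ?_)
  · split_ifs with hq
    exacts [hq.le, bot_le]
  · obtain ⟨q, hcq, hqa⟩ := EReal.exists_rat_btwn_of_lt hc
    exact hcq.trans_le (le_iSup_of_le q (by rw [if_pos hqa]))

theorem EventuallyMeasurable.filter_mono {α β : Type*} {m : MeasurableSpace α}
    [MeasurableSpace β] {l l' : Filter α} [CountableInterFilter l] [CountableInterFilter l']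
    {f : α → β} (hf : EventuallyMeasurable m l f) (hl : l' ≤ l) :
    EventuallyMeasurable m l' f := fun _ hs =>
  let ⟨t, ht, hst⟩ := hf hs
  ⟨t, ht, hst.filter_mono hl⟩

theorem EventuallyMeasurable.exists_measurable_eventuallyEq {α : Type*} {m : MeasurableSpace α}
    {l : Filter α} [CountableInterFilter l] {f : α → ℝ} (hf : EventuallyMeasurable m l f) :
    ∃ g : α → ℝ, Measurable g ∧ f =ᶠ[l] g := by
  classical
  choose W hW hfW using fun q : ℚ => hf (measurableSet_Ioi (a := (q : ℝ)))
  refine ⟨fun x => (⨆ q : ℚ, if x ∈ W q then ((q : ℝ) : EReal) else ⊥).toReal,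
    (Measurable.iSup fun q => Measurable.ite (hW q) measurable_const measurable_const).ereal_toReal,
    ?_⟩
  -- off an `l`-small set, `x ∈ W q ↔ q < f x` for every rational `q`
  filter_upwards [eventually_countable_forall.2 fun q => (hfW q).mem_iff] with x hx
  simp only [← hx, mem_preimage, mem_Ioi, ← EReal.coe_lt_coe_iff, EReal.iSup_rat_ite_lt,
    EReal.toReal_coe]

section LeftNil

variable {X Y : Type*} {mX : MeasurableSpace X} [MeasurableSpace Y]
  {Py : Y → Measure X} {Q : Measure Y}

theorem mem_leftNil_iff {E : Set (X × Y)} :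
    E ∈ leftNil Py Q ↔ ∀ᵐ y ∂Q, Py y {x | (x, y) ∈ E} = 0 := by
  refine ⟨fun ⟨N, _, hN0, hN⟩ => (measure_eq_zero_iff_ae_notMem.1 hN0).mono hN, fun h => ?_⟩
  obtain ⟨N, hsub, hNm, hN0⟩ := exists_measurable_superset_of_null (ae_iff.1 h)
  exact ⟨N, hNm, hN0, fun y hy => not_not.1 fun hy' => hy (hsub hy')⟩

theorem leftNil_mono {E E' : Set (X × Y)} (h : E ⊆ E') (hE' : E' ∈ leftNil Py Q) :
    E ∈ leftNil Py Q :=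
  mem_leftNil_iff.2 <| (mem_leftNil_iff.1 hE').mono fun _ hy =>
    measure_mono_null (fun _ hx => h hx) hy

theorem sUnion_mem_leftNil {S : Set (Set (X × Y))} (hS : S.Countable)
    (h : ∀ E ∈ S, E ∈ leftNil Py Q) : ⋃₀ S ∈ leftNil Py Q := by
  have hsec : ∀ y, {x | (x, y) ∈ ⋃₀ S} = ⋃ E ∈ S, {x | (x, y) ∈ E} := fun y => by
    ext; simp
  simp only [mem_leftNil_iff, hsec, measure_biUnion_null_iff hS] at h ⊢
  exact (ae_ball_iff hS).2 h

variable (Py Q) in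
def leftNilFilter : Filter (X × Y) :=
  Filter.ofCountableUnion (leftNil Py Q) (fun _ => sUnion_mem_leftNil)
    (fun _ hE' _ h => leftNil_mono h hE')

instance : CountableInterFilter (leftNilFilter Py Q) :=
  countableInter_ofCountableUnion ..

theorem eventuallyEq_leftNilFilter_iff {β : Type*} {f g : X × Y → β} :
    f =ᶠ[leftNilFilter Py Q] g ↔ {p | f p ≠ g p} ∈ leftNil Py Q :=
  Iff.rfl

theorem eventuallyEq_set_leftNilFilter_iff {s t : Set (X × Y)} :
    s =ᶠ[leftNilFilter Py Q] t ↔ s ∆ t ∈ leftNil Py Q := by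
  have hcompl : {p | p ∈ s ↔ p ∈ t}ᶜ = s ∆ t := by
    ext p
    simp only [mem_compl_iff, mem_ofPred_eq, mem_symmDiff]
    tauto
  rw [eventuallyEq_set, ← hcompl]
  rfl

theorem starSigma_eq_eventuallyMeasurableSpace :
    starSigma Py Q = eventuallyMeasurableSpace inferInstance (leftNilFilter Py Q) := by
  refine le_antisymm (MeasurableSpace.generateFrom_le ?_) fun s ⟨t, ht, hst⟩ => ?_
  · rintro _ ⟨W, N, hW, hN, rfl⟩
    refine ⟨W, hW, eventuallyEq_set_leftNilFilter_iff.2 ?_⟩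
    rwa [symmDiff_comm, symmDiff_symmDiff_cancel_left]
  · refine MeasurableSpace.measurableSet_generateFrom ⟨t, t ∆ s, ht, ?_, ?_⟩
    · rw [symmDiff_comm]; exact eventuallyEq_set_leftNilFilter_iff.1 hst
    · exact (symmDiff_symmDiff_cancel_left t s).symm

end LeftNil

section Product

variable {X Y : Type*} [MeasurableSpace X] [MeasurableSpace Y] {P : Measure X} {Q : Measure Y}

theorem mem_leftNil_of_prod_null [SFinite P] [SFinite Q] {E : Set (X × Y)}
    (hE : P.prod Q E = 0) : E ∈ leftNil (fun _ => P) Q := by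
  have hswap : Q.prod P (Prod.swap ⁻¹' E) = 0 := by
    rwa [Measure.measurePreserving_swap.measure_preimage_emb
      MeasurableEquiv.prodComm.measurableEmbedding]
  exact mem_leftNil_iff.2 (Measure.measure_ae_null_of_prod_null hswap)

theorem leftNilFilter_le_ae_prod [SFinite P] [SFinite Q] :
    leftNilFilter (fun _ => P) Q ≤ ae (P.prod Q) :=
  fun _ hs => mem_leftNil_of_prod_null hs

theorem exists_nullMeasurable_version_of_mem_leftNil [SFinite Q] {β : Type*}
    [MeasurableSpace β] {f g : X × Y → β} (hg : NullMeasurable g (P.prod Q))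
    (hfg : {p | f p ≠ g p} ∈ leftNil (fun _ => P) Q) :
    ∃ g' : X × Y → β, NullMeasurable g' (P.prod Q) ∧ ∀ y, P {x | f (x, y) ≠ g' (x, y)} = 0 := by
  classical
  obtain ⟨N, -, hN0, hN⟩ := hfg
  refine ⟨(univ ×ˢ N).piecewise f g, hg.congr ?_, fun y => ?_⟩
  · have hnull : P.prod Q (univ ×ˢ N) = 0 := by simp [Measure.prod_prod, hN0]
    refine ae_iff.2 (measure_mono_null (fun p hp => ?_) hnull)
    refine ⟨trivial, not_not.1 fun hpN => hp ?_⟩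
    exact (piecewise_eq_of_notMem _ _ _ fun h => hpN h.2).symm
  · by_cases hy : y ∈ N
    · simp [Set.piecewise, hy]
    · simpa [Set.piecewise, hy] using hN y hy

end Product

theorem measurable_version_iff_star_measurable_general {X Y : Type*}
    [MeasurableSpace X] [MeasurableSpace Y]
    (P : Measure X) (Q : Measure Y) [IsProbabilityMeasure P] [IsProbabilityMeasure Q]
    (f : X × Y → ℝ) :
    (∃ g : X × Y → ℝ, NullMeasurable g (P.prod Q) ∧
        ∀ y, P {x | f (x, y) ≠ g (x, y)} = 0) ↔
    @Measurable _ _ (starSigma (fun _ : Y => P) Q) _ f := by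
  rw [starSigma_eq_eventuallyMeasurableSpace]
  change _ ↔ EventuallyMeasurable _ (leftNilFilter (fun _ => P) Q) f
  constructor
  · rintro ⟨g, hg, hfg⟩
    have hfg' : f =ᶠ[leftNilFilter (fun _ => P) Q] g :=
      eventuallyEq_leftNilFilter_iff.2 (mem_leftNil_iff.2 (ae_of_all _ hfg))
    exact (((nullMeasurable_iff_eventuallyMeasurable g).1 hg).filter_mono
      leftNilFilter_le_ae_prod).congr hfg'
  · intro hf
    obtain ⟨g, hg, hfg⟩ := hf.exists_measurable_eventuallyEq
    exact exists_nullMeasurable_version_of_mem_leftNil hg.nullMeasurable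
      (eventuallyEq_leftNilFilter_iff.1 hfg)

/-- (direct product case `P_y = P`, `R = P×Q`) a function
`f : X×Y → ℝ` all of whose `Y`-sections are `P̂`-measurable admits a version `g`
measurable w.r.t. the `(P×Q)`-completion of `𝔄⊗𝔅` with `P̂({x : f(x,y) ≠ g(x,y)}) = 0`
for every `y`, if and only if `f` is `𝔄⋇𝔅`-measurable. -/
theorem measurable_version_iff_star_measurable {X Y : Type*}
    [MeasurableSpace X] [MeasurableSpace Y]
    (P : Measure X) (Q : Measure Y) [IsProbabilityMeasure P] [IsProbabilityMeasure Q]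
    (f : X × Y → ℝ) (hsec : ∀ y, NullMeasurable (fun x => f (x, y)) P) :
    (∃ g : X × Y → ℝ, NullMeasurable g (P.prod Q) ∧
        ∀ y, P {x | f (x, y) ≠ g (x, y)} = 0) ↔
    @Measurable _ _ (starSigma (fun _ : Y => P) Q) _ f :=
  measurable_version_iff_star_measurable_general P Q f
end
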